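/- arXiv:1405.1798 — 7 statements merged into one kernel-verified Lean document; each statement's English description precedes it below -/
import Mathlib

section
/- Let Φ(ρ) = Σᵢ pᵢ Uᵢ ρ Uᵢ† be a random unitary channel on a finite-dimensional Hilbert space S whose unitary Kraus operators Uᵢ mutually commute. Then Φ has no private subspace of dimension ≥ 2: there do not exist two linearly independent unit vectors |0_L⟩, |1_L⟩ spanning a subspace C such that Φ maps the density matrices of all unit vectors in C to one fixed density matrix ρ₀. -/
open Matrix ComplexOrder

/-!
If `Uᵢ† A Uᵢ = A` for all `i`, then `tr (A Φ(X)) = tr (A X)`, so `⟨ψ, A ψ⟩ = tr (A ρ₀)` for every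
unit vector `ψ` of a private subspace `C`; by polarization the compression of `A` to `C` is a
scalar. When the `Uᵢ` commute, every `A = U_{i₀}† U_j` is of this kind. Choose `x ∈ C` nonzero and
orthogonal to `v ∈ C`, with `p_{i₀} > 0`, and put `z = U_{i₀} x`. Then `⟨z, U_j v⟩ = 0` for all `j`,
so `⟨z, ρ₀ z⟩ = ⟨z, Φ(v v†) z⟩ = 0`, whereas `⟨z, Φ(x x†) z⟩ ≥ p_{i₀} ‖x‖⁴ > 0` although
`Φ(x x†) = ‖x‖² ρ₀`.
-/

theorem star_mul_mul_eq_of_commute {R : Type*} [Monoid R] [StarMul R] {u v w : R}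
    (hu : star u * u = 1) (hv : Commute u v) (hw : Commute u w) :
    star u * (star v * w) * u = star v * w := by
  have hstar : star u * star v = star v * star u := by
    rw [← star_mul, ← star_mul, hv.eq]
  calc star u * (star v * w) * u = star v * (star u * (w * u)) := by
        rw [← mul_assoc (star u), hstar]; simp only [mul_assoc]
    _ = star v * w := by rw [← hw.eq, ← mul_assoc (star u) u w, hu, one_mul]

section

variable {m ι : Type*} [Fintype m] [Fintype ι]

theorem star_mulVec_dotProduct_mulVec (M N : Matrix m m ℂ) (x y : m → ℂ) :
    star (M *ᵥ x) ⬝ᵥ (N *ᵥ y) = star x ⬝ᵥ ((Mᴴ * N) *ᵥ y) := by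
  rw [star_mulVec, dotProduct_mulVec, vecMul_vecMul, ← dotProduct_mulVec]

theorem exists_star_smul_dotProduct_smul_eq_one {ψ : m → ℂ} (hψ : ψ ≠ 0) :
    ∃ c : ℂ, star (c • ψ) ⬝ᵥ (c • ψ) = 1 := by
  obtain ⟨r, hr, hs⟩ : ∃ r : ℝ, 0 < r ∧ star ψ ⬝ᵥ ψ = r := by
    have hpos := dotProduct_star_self_pos_iff.2 hψ
    exact ⟨_, (Complex.pos_iff.1 hpos).1, Complex.eq_re_of_ofReal_le (r := 0) (by simp [hpos.le])⟩
  refine ⟨((√r)⁻¹ : ℝ), ?_⟩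
  rw [star_smul, smul_dotProduct, dotProduct_smul, smul_smul, smul_eq_mul, hs, Complex.star_def,
    Complex.conj_ofReal, ← Complex.ofReal_mul, ← Complex.ofReal_mul, Complex.ofReal_eq_one,
    ← mul_inv, Real.mul_self_sqrt hr.le, inv_mul_cancel₀ hr.ne']

theorem star_dotProduct_mulVec_eq_mul_of_forall_mem {A : Matrix m m ℂ} {τ : ℂ}
    {C : Submodule ℂ (m → ℂ)} (hA : ∀ ψ ∈ C, star ψ ⬝ᵥ (A *ᵥ ψ) = τ * (star ψ ⬝ᵥ ψ))
    {x y : m → ℂ} (hx : x ∈ C) (hy : y ∈ C) : star x ⬝ᵥ (A *ᵥ y) = τ * (star x ⬝ᵥ y) := by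
  have h₁ := hA (x + y) (C.add_mem hx hy)
  have h₂ := hA (x + Complex.I • y) (C.add_mem hx (C.smul_mem _ hy))
  simp only [star_add, star_smul, mulVec_add, mulVec_smul, add_dotProduct, dotProduct_add,
    smul_dotProduct, dotProduct_smul, smul_eq_mul, hA x hx, hA y hy, Complex.star_def,
    Complex.conj_I] at h₁ h₂
  linear_combination (h₁ - Complex.I * h₂) / 2 + (star x ⬝ᵥ (A *ᵥ y) - star y ⬝ᵥ (A *ᵥ x)
    - τ * (star x ⬝ᵥ y) + τ * (star y ⬝ᵥ x)) / 2 * Complex.I_mul_I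

theorem exists_mem_span_pair_ne_zero_star_dotProduct_eq_zero {v w : m → ℂ}
    (h : LinearIndependent ℂ ![v, w]) :
    ∃ x ∈ Submodule.span ℂ {v, w}, x ≠ 0 ∧ star x ⬝ᵥ v = 0 := by
  refine ⟨(star v ⬝ᵥ v) • w - (star v ⬝ᵥ w) • v,
    Submodule.sub_mem _ (Submodule.smul_mem _ _ (Submodule.subset_span (by simp)))
      (Submodule.smul_mem _ _ (Submodule.subset_span (by simp))), ?_, ?_⟩
  · intro hx
    have hvv := (LinearIndependent.pair_iff.1 h (-(star v ⬝ᵥ w)) (star v ⬝ᵥ v)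
      (by rw [← hx]; module)).2
    exact h.ne_zero 0 (dotProduct_star_self_eq_zero.1 hvv)
  · rw [star_sub, star_smul, star_smul, sub_dotProduct, smul_dotProduct, smul_dotProduct,
      ← star_dotProduct, ← star_dotProduct, smul_eq_mul, smul_eq_mul, mul_comm, sub_self]

noncomputable def randomUnitaryChannel (p : ι → ℝ) (U : ι → Matrix m m ℂ) :
    Matrix m m ℂ →ₗ[ℂ] Matrix m m ℂ where
  toFun X := ∑ i, (p i : ℂ) • (U i * X * (U i)ᴴ)
  map_add' X Y := by simp only [Matrix.mul_add, Matrix.add_mul, smul_add, Finset.sum_add_distrib]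
  map_smul' c X := by simp only [Matrix.mul_smul, Matrix.smul_mul, Finset.smul_sum, smul_comm c,
    RingHom.id_apply]

def IsPrivateSubspace (Φ : Matrix m m ℂ →ₗ[ℂ] Matrix m m ℂ) (C : Submodule ℂ (m → ℂ))
    (ρ₀ : Matrix m m ℂ) : Prop :=
  ∀ ψ ∈ C, star ψ ⬝ᵥ ψ = 1 → Φ (vecMulVec ψ (star ψ)) = ρ₀

theorem trace_mul_randomUnitaryChannel {p : ι → ℝ} (hp1 : ∑ i, p i = 1)
    {U : ι → Matrix m m ℂ} {A : Matrix m m ℂ} (hA : ∀ i, (U i)ᴴ * A * U i = A)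
    (X : Matrix m m ℂ) : trace (A * randomUnitaryChannel p U X) = trace (A * X) := by
  have hterm : ∀ i, trace (A * (U i * X * (U i)ᴴ)) = trace (A * X) := fun i => by
    rw [← Matrix.mul_assoc, ← Matrix.mul_assoc, trace_mul_comm, ← Matrix.mul_assoc,
      ← Matrix.mul_assoc, hA]
  simp only [randomUnitaryChannel, LinearMap.coe_mk, AddHom.coe_mk, Matrix.mul_sum,
    Matrix.mul_smul, trace_sum, trace_smul, hterm, ← Finset.sum_smul, ← Complex.ofReal_sum, hp1,
    Complex.ofReal_one, one_smul]

theorem star_dotProduct_randomUnitaryChannel_mulVec (p : ι → ℝ) (U : ι → Matrix m m ℂ)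
    (ψ z : m → ℂ) :
    star z ⬝ᵥ (randomUnitaryChannel p U (vecMulVec ψ (star ψ)) *ᵥ z) =
      ((∑ i, p i * Complex.normSq (star z ⬝ᵥ (U i *ᵥ ψ)) : ℝ) : ℂ) := by
  have hterm : ∀ i, star z ⬝ᵥ ((U i * vecMulVec ψ (star ψ) * (U i)ᴴ) *ᵥ z) =
      Complex.normSq (star z ⬝ᵥ (U i *ᵥ ψ)) := fun i => by
    rw [mul_vecMulVec, vecMulVec_mul, ← star_mulVec, vecMulVec_mulVec, dotProduct_smul,
      op_smul_eq_mul, star_dotProduct (U i *ᵥ ψ), ← Complex.mul_conj, Complex.star_def]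
  simp only [randomUnitaryChannel, LinearMap.coe_mk, AddHom.coe_mk, sum_mulVec, smul_mulVec,
    dotProduct_sum, dotProduct_smul, hterm, smul_eq_mul, Complex.ofReal_sum, Complex.ofReal_mul]

theorem star_dotProduct_randomUnitaryChannel_mulVec_eq_zero_iff {p : ι → ℝ} (hp : ∀ i, 0 ≤ p i)
    (U : ι → Matrix m m ℂ) (ψ z : m → ℂ) :
    star z ⬝ᵥ (randomUnitaryChannel p U (vecMulVec ψ (star ψ)) *ᵥ z) = 0 ↔
      ∀ i, p i = 0 ∨ star z ⬝ᵥ (U i *ᵥ ψ) = 0 := by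
  rw [star_dotProduct_randomUnitaryChannel_mulVec, Complex.ofReal_eq_zero,
    Finset.sum_eq_zero_iff_of_nonneg fun i _ => mul_nonneg (hp i) (Complex.normSq_nonneg _)]
  simp only [Finset.mem_univ, true_imp_iff, mul_eq_zero, Complex.normSq_eq_zero]

namespace IsPrivateSubspace

variable {Φ : Matrix m m ℂ →ₗ[ℂ] Matrix m m ℂ} {C : Submodule ℂ (m → ℂ)} {ρ₀ : Matrix m m ℂ}

theorem apply_vecMulVec (hC : IsPrivateSubspace Φ C ρ₀) {ψ : m → ℂ} (hψ : ψ ∈ C) :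
    Φ (vecMulVec ψ (star ψ)) = (star ψ ⬝ᵥ ψ) • ρ₀ := by
  rcases eq_or_ne ψ 0 with rfl | hψ0
  · simp
  obtain ⟨c, hc⟩ := exists_star_smul_dotProduct_smul_eq_one hψ0
  have hcψ := hC _ (C.smul_mem c hψ) hc
  rw [star_smul, smul_dotProduct, dotProduct_smul, smul_smul, smul_eq_mul] at hc
  rw [star_smul, vecMulVec_smul, smul_vecMulVec, map_smul, map_smul, smul_smul] at hcψ
  rw [← hcψ, smul_smul, mul_comm, hc, one_smul]

theorem star_dotProduct_mulVec_eq (hC : IsPrivateSubspace Φ C ρ₀) {A : Matrix m m ℂ}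
    (hA : ∀ X, trace (A * Φ X) = trace (A * X)) {x y : m → ℂ} (hx : x ∈ C) (hy : y ∈ C) :
    star x ⬝ᵥ (A *ᵥ y) = trace (A * ρ₀) * (star x ⬝ᵥ y) := by
  refine star_dotProduct_mulVec_eq_mul_of_forall_mem (fun ψ hψ => ?_) hx hy
  rw [dotProduct_comm, ← trace_vecMulVec, ← mul_vecMulVec, ← hA, hC.apply_vecMulVec hψ,
    Matrix.mul_smul, trace_smul, smul_eq_mul, mul_comm]

end IsPrivateSubspace

end

/-- A random unitary channel with mutually commuting unitary Kraus operators
has no private subspace of dimension ≥ 2. -/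
theorem random_unitary_commuting_no_private_subspace
    {n : ℕ} {ι : Type*} [Fintype ι]
    (p : ι → ℝ) (hp : ∀ i, 0 ≤ p i) (hp1 : ∑ i, p i = 1)
    (U : ι → Matrix (Fin n) (Fin n) ℂ)
    (hU : ∀ i, U i * (U i)ᴴ = 1 ∧ (U i)ᴴ * U i = 1)
    (hcomm : ∀ i j, U i * U j = U j * U i) :
    ¬ ∃ (v w : Fin n → ℂ) (ρ₀ : Matrix (Fin n) (Fin n) ℂ),
        star v ⬝ᵥ v = 1 ∧ star w ⬝ᵥ w = 1 ∧
        LinearIndependent ℂ ![v, w] ∧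
        ∀ ψ : Fin n → ℂ, ψ ∈ Submodule.span ℂ ({v, w} : Set (Fin n → ℂ)) →
          star ψ ⬝ᵥ ψ = 1 →
          ∑ i, (p i : ℂ) • (U i * vecMulVec ψ (star ψ) * (U i)ᴴ) = ρ₀ := by
  rintro ⟨v, w, ρ₀, hv, -, hli, hpriv⟩
  have hC : IsPrivateSubspace (randomUnitaryChannel p U) _ ρ₀ := hpriv
  have hvC : v ∈ Submodule.span ℂ {v, w} := Submodule.subset_span (by simp)
  obtain ⟨x, hxC, hx0, hxv⟩ := exists_mem_span_pair_ne_zero_star_dotProduct_eq_zero hli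
  obtain ⟨i₀, -, hi₀⟩ := Finset.exists_lt_of_sum_lt (show ∑ i, (0 : ℝ) < ∑ i, p i by simp [hp1])
  set z := U i₀ *ᵥ x
  have hzv : ∀ j, star z ⬝ᵥ (U j *ᵥ v) = 0 := fun j => by
    have hA := trace_mul_randomUnitaryChannel (A := (U i₀)ᴴ * U j) hp1 fun i =>
      star_mul_mul_eq_of_commute (hU i).2 (hcomm i i₀) (hcomm i j)
    rw [star_mulVec_dotProduct_mulVec, hC.star_dotProduct_mulVec_eq hA hxC hvC, hxv, mul_zero]
  have hρ₀ : star z ⬝ᵥ (ρ₀ *ᵥ z) = 0 := by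
    rw [← hC v hvC hv, star_dotProduct_randomUnitaryChannel_mulVec_eq_zero_iff hp]
    exact fun j => Or.inr (hzv j)
  have hzx : star z ⬝ᵥ (randomUnitaryChannel p U (vecMulVec x (star x)) *ᵥ z) = 0 := by
    rw [hC.apply_vecMulVec hxC, smul_mulVec, dotProduct_smul, hρ₀, smul_zero]
  rcases (star_dotProduct_randomUnitaryChannel_mulVec_eq_zero_iff hp U x z).1 hzx i₀ with h | h
  · exact hi₀.ne' h
  · rw [star_mulVec_dotProduct_mulVec, (hU i₀).2, one_mulVec, dotProduct_star_self_eq_zero] at h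
    exact hx0 h
end

section
/- Let U = CNOT₁₂ · CNOT₂₁ · (K† ⊗ I₂), where K = (1/√2)[[1,1],[i,−i]]. Then conjugation by U maps X⊗X ↦ I⊗Y, Y⊗I ↦ I⊗Z, and Z⊗X ↦ I⊗X. Consequently, for every ρ_L = (1/4)(I⊗I + α X⊗X + β Y⊗I + γ Z⊗X), one has U ρ_L U† = (1/2)I₂ ⊗ (1/2)(I₂ + γX + αY + βZ). -/
/-!
In the Heisenberg picture each Pauli product is pushed through the three gates in turn.
Conjugation by `K†` permutes the single-qubit Paulis cyclically, `X ↦ Y ↦ Z ↦ X` (the columns of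
`K` are the eigenvectors of `Y`), and conjugation by a CNOT just permutes matrix entries:
  `X⊗X ↦ Y⊗X ↦ Z⊗Y ↦ I⊗Y`,  `Y⊗I ↦ Z⊗I ↦ Z⊗Z ↦ I⊗Z`,  `Z⊗X ↦ X⊗X ↦ I⊗X ↦ I⊗X`.
Conjugation by the unitary `U` is linear and fixes `I⊗I`, so `ρ_L` is mapped term by term.
-/

open Matrix Kronecker

noncomputable section

def PX : Matrix (Fin 2) (Fin 2) ℂ := !![0, 1; 1, 0]
def PY : Matrix (Fin 2) (Fin 2) ℂ := !![0, -Complex.I; Complex.I, 0]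
def PZ : Matrix (Fin 2) (Fin 2) ℂ := !![1, 0; 0, -1]

def Kgate : Matrix (Fin 2) (Fin 2) ℂ :=
  ((Real.sqrt 2 : ℂ))⁻¹ • !![1, 1; Complex.I, -Complex.I]

/-- CNOT with control on qubit 1 and target on qubit 2: |a,b⟩ ↦ |a, a+b⟩. -/
def CNOT12 : Matrix (Fin 2 × Fin 2) (Fin 2 × Fin 2) ℂ :=
  fun p q => if p.1 = q.1 ∧ p.2 = q.1 + q.2 then 1 else 0

/-- CNOT with control on qubit 2 and target on qubit 1: |a,b⟩ ↦ |a+b, b⟩. -/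
def CNOT21 : Matrix (Fin 2 × Fin 2) (Fin 2 × Fin 2) ℂ :=
  fun p q => if p.2 = q.2 ∧ p.1 = q.2 + q.1 then 1 else 0

def Urot : Matrix (Fin 2 × Fin 2) (Fin 2 × Fin 2) ℂ :=
  CNOT12 * CNOT21 * (Kgateᴴ ⊗ₖ (1 : Matrix (Fin 2) (Fin 2) ℂ))

section Conjugation

variable {l l' m m' n : Type*} [Fintype m] [Fintype m'] [Fintype n]
  {R : Type*} [CommRing R] [StarRing R]

theorem mul_mul_conjTranspose_mul (U : Matrix l m R) (V : Matrix m n R) (A : Matrix n n R) :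
    U * V * A * (U * V)ᴴ = U * (V * A * Vᴴ) * Uᴴ := by
  simp only [conjTranspose_mul, Matrix.mul_assoc]

theorem kronecker_mul_kronecker_mul_conjTranspose
    (A : Matrix l m R) (B : Matrix l' m' R) (P : Matrix m m R) (Q : Matrix m' m' R) :
    (A ⊗ₖ B) * (P ⊗ₖ Q) * (A ⊗ₖ B)ᴴ = (A * P * Aᴴ) ⊗ₖ (B * Q * Bᴴ) := by
  rw [conjTranspose_kronecker, ← mul_kronecker_mul, ← mul_kronecker_mul]

end Conjugation

theorem Kgate_conjTranspose_mul_mul (P : Matrix (Fin 2) (Fin 2) ℂ) :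
    Kgateᴴ * P * Kgate
      = (2 : ℂ)⁻¹ • (!![1, 1; Complex.I, -Complex.I]ᴴ * P * !![1, 1; Complex.I, -Complex.I]) := by
  have hs : star ((Real.sqrt 2 : ℂ))⁻¹ * ((Real.sqrt 2 : ℂ))⁻¹ = (2 : ℂ)⁻¹ := by
    rw [star_inv₀, Complex.star_def, Complex.conj_ofReal, ← mul_inv, ← Complex.ofReal_mul,
      Real.mul_self_sqrt zero_le_two, Complex.ofReal_ofNat]
  rw [Kgate, conjTranspose_smul, smul_mul, smul_mul, Matrix.mul_smul, smul_smul, hs]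

theorem Kgate_conj_one : Kgateᴴ * 1 * Kgate = 1 := by
  rw [Kgate_conjTranspose_mul_mul]
  ext i j; fin_cases i <;> fin_cases j <;> simp [mul_apply, Fin.sum_univ_two] <;> ring

theorem Kgate_conj_PX : Kgateᴴ * PX * Kgate = PY := by
  rw [Kgate_conjTranspose_mul_mul]
  ext i j; fin_cases i <;> fin_cases j <;> simp [PX, PY, mul_apply, Fin.sum_univ_two] <;> ring

theorem Kgate_conj_PY : Kgateᴴ * PY * Kgate = PZ := by
  rw [Kgate_conjTranspose_mul_mul]
  ext i j; fin_cases i <;> fin_cases j <;> simp [PY, PZ, mul_apply, Fin.sum_univ_two] <;> ring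

theorem Kgate_conj_PZ : Kgateᴴ * PZ * Kgate = PX := by
  rw [Kgate_conjTranspose_mul_mul]
  ext i j; fin_cases i <;> fin_cases j <;> simp [PZ, PX, mul_apply, Fin.sum_univ_two] <;> ring

theorem CNOT21_mul_mul_conjTranspose_apply (A : Matrix (Fin 2 × Fin 2) (Fin 2 × Fin 2) ℂ)
    (a b c d : Fin 2) : (CNOT21 * A * CNOT21ᴴ) (a, b) (c, d) = A (a + b, b) (c + d, d) := by
  fin_cases a <;> fin_cases b <;> fin_cases c <;> fin_cases d <;>
    simp [CNOT21, mul_apply, Fintype.sum_prod_type, Fin.sum_univ_two, conjTranspose_apply]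

theorem CNOT12_mul_mul_conjTranspose_apply (A : Matrix (Fin 2 × Fin 2) (Fin 2 × Fin 2) ℂ)
    (a b c d : Fin 2) : (CNOT12 * A * CNOT12ᴴ) (a, b) (c, d) = A (a, a + b) (c, c + d) := by
  fin_cases a <;> fin_cases b <;> fin_cases c <;> fin_cases d <;>
    simp [CNOT12, mul_apply, Fintype.sum_prod_type, Fin.sum_univ_two, conjTranspose_apply]

theorem CNOT21_conj_one_one :
    CNOT21 * ((1 : Matrix (Fin 2) (Fin 2) ℂ) ⊗ₖ 1) * CNOT21ᴴ
      = (1 : Matrix (Fin 2) (Fin 2) ℂ) ⊗ₖ 1 := by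
  ext ⟨a, b⟩ ⟨c, d⟩
  rw [CNOT21_mul_mul_conjTranspose_apply]
  fin_cases a <;> fin_cases b <;> fin_cases c <;> fin_cases d <;> simp [one_apply]

theorem CNOT21_conj_PY_PX : CNOT21 * (PY ⊗ₖ PX) * CNOT21ᴴ = PZ ⊗ₖ PY := by
  ext ⟨a, b⟩ ⟨c, d⟩
  rw [CNOT21_mul_mul_conjTranspose_apply]
  fin_cases a <;> fin_cases b <;> fin_cases c <;> fin_cases d <;> simp [PX, PY, PZ]

theorem CNOT21_conj_PZ_one :
    CNOT21 * (PZ ⊗ₖ (1 : Matrix (Fin 2) (Fin 2) ℂ)) * CNOT21ᴴ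
      = PZ ⊗ₖ PZ := by
  ext ⟨a, b⟩ ⟨c, d⟩
  rw [CNOT21_mul_mul_conjTranspose_apply]
  fin_cases a <;> fin_cases b <;> fin_cases c <;> fin_cases d <;> simp [PZ, one_apply]

theorem CNOT21_conj_PX_PX :
    CNOT21 * (PX ⊗ₖ PX) * CNOT21ᴴ
      = (1 : Matrix (Fin 2) (Fin 2) ℂ) ⊗ₖ PX := by
  ext ⟨a, b⟩ ⟨c, d⟩
  rw [CNOT21_mul_mul_conjTranspose_apply]
  fin_cases a <;> fin_cases b <;> fin_cases c <;> fin_cases d <;> simp [PX, one_apply]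

theorem CNOT12_conj_one_one :
    CNOT12 * ((1 : Matrix (Fin 2) (Fin 2) ℂ) ⊗ₖ 1) * CNOT12ᴴ
      = (1 : Matrix (Fin 2) (Fin 2) ℂ) ⊗ₖ 1 := by
  ext ⟨a, b⟩ ⟨c, d⟩
  rw [CNOT12_mul_mul_conjTranspose_apply]
  fin_cases a <;> fin_cases b <;> fin_cases c <;> fin_cases d <;> simp [one_apply]

theorem CNOT12_conj_PZ_PY :
    CNOT12 * (PZ ⊗ₖ PY) * CNOT12ᴴ
      = (1 : Matrix (Fin 2) (Fin 2) ℂ) ⊗ₖ PY := by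
  ext ⟨a, b⟩ ⟨c, d⟩
  rw [CNOT12_mul_mul_conjTranspose_apply]
  fin_cases a <;> fin_cases b <;> fin_cases c <;> fin_cases d <;> simp [PY, PZ, one_apply]

theorem CNOT12_conj_PZ_PZ :
    CNOT12 * (PZ ⊗ₖ PZ) * CNOT12ᴴ
      = (1 : Matrix (Fin 2) (Fin 2) ℂ) ⊗ₖ PZ := by
  ext ⟨a, b⟩ ⟨c, d⟩
  rw [CNOT12_mul_mul_conjTranspose_apply]
  fin_cases a <;> fin_cases b <;> fin_cases c <;> fin_cases d <;> simp [PZ, one_apply]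

theorem CNOT12_conj_one_PX :
    CNOT12 * ((1 : Matrix (Fin 2) (Fin 2) ℂ) ⊗ₖ PX) * CNOT12ᴴ
      = (1 : Matrix (Fin 2) (Fin 2) ℂ) ⊗ₖ PX := by
  ext ⟨a, b⟩ ⟨c, d⟩
  rw [CNOT12_mul_mul_conjTranspose_apply]
  fin_cases a <;> fin_cases b <;> fin_cases c <;> fin_cases d <;> simp [PX, one_apply]

theorem Urot_conj_kronecker (P Q : Matrix (Fin 2) (Fin 2) ℂ) :
    Urot * (P ⊗ₖ Q) * Urotᴴ
      = CNOT12 * (CNOT21 * ((Kgateᴴ * P * Kgate) ⊗ₖ Q) * CNOT21ᴴ) * CNOT12ᴴ := by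
  rw [Urot, mul_mul_conjTranspose_mul, mul_mul_conjTranspose_mul,
    kronecker_mul_kronecker_mul_conjTranspose, conjTranspose_conjTranspose, Matrix.one_mul,
    conjTranspose_one, Matrix.mul_one]

/-- Conjugation by U = CNOT₁₂·CNOT₂₁·(K†⊗I) maps XX ↦ IY, YI ↦ IZ, ZX ↦ IX,
hence sends ρ_L = (1/4)(II + αXX + βYI + γZX) to (1/2)I ⊗ (1/2)(I + γX + αY + βZ). -/
theorem conjugation_maps_logical_algebra :
    (Urot * (PX ⊗ₖ PX) * Urotᴴ = (1 : Matrix (Fin 2) (Fin 2) ℂ) ⊗ₖ PY) ∧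
    (Urot * (PY ⊗ₖ (1 : Matrix (Fin 2) (Fin 2) ℂ)) * Urotᴴ = (1 : Matrix (Fin 2) (Fin 2) ℂ) ⊗ₖ PZ) ∧
    (Urot * (PZ ⊗ₖ PX) * Urotᴴ = (1 : Matrix (Fin 2) (Fin 2) ℂ) ⊗ₖ PX) ∧
    ∀ α β γ : ℝ,
      Urot * ((1/4 : ℂ) • ((1 : Matrix (Fin 2) (Fin 2) ℂ) ⊗ₖ 1
          + (α : ℂ) • (PX ⊗ₖ PX) + (β : ℂ) • (PY ⊗ₖ 1) + (γ : ℂ) • (PZ ⊗ₖ PX))) * Urotᴴ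
      = ((1/2 : ℂ) • (1 : Matrix (Fin 2) (Fin 2) ℂ)) ⊗ₖ
          ((1/2 : ℂ) • ((1 : Matrix (Fin 2) (Fin 2) ℂ)
            + (γ : ℂ) • PX + (α : ℂ) • PY + (β : ℂ) • PZ)) := by
  have hII : Urot * ((1 : Matrix (Fin 2) (Fin 2) ℂ) ⊗ₖ 1) * Urotᴴ = 1 ⊗ₖ 1 := by
    rw [Urot_conj_kronecker, Kgate_conj_one, CNOT21_conj_one_one, CNOT12_conj_one_one]
  have hXX : Urot * (PX ⊗ₖ PX) * Urotᴴ = 1 ⊗ₖ PY := by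
    rw [Urot_conj_kronecker, Kgate_conj_PX, CNOT21_conj_PY_PX, CNOT12_conj_PZ_PY]
  have hYI : Urot * (PY ⊗ₖ 1) * Urotᴴ = 1 ⊗ₖ PZ := by
    rw [Urot_conj_kronecker, Kgate_conj_PY, CNOT21_conj_PZ_one, CNOT12_conj_PZ_PZ]
  have hZX : Urot * (PZ ⊗ₖ PX) * Urotᴴ = 1 ⊗ₖ PX := by
    rw [Urot_conj_kronecker, Kgate_conj_PZ, CNOT21_conj_PX_PX, CNOT12_conj_one_PX]
  refine ⟨hXX, hYI, hZX, fun α β γ => ?_⟩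
  simp only [Matrix.mul_smul, Matrix.smul_mul, Matrix.mul_add, Matrix.add_mul,
    hII, hXX, hYI, hZX, smul_kronecker, kronecker_smul, kronecker_add, smul_smul]
  module
end
end

section
/- Suppose a channel Φ with Kraus operators {Vᵢ} privatizes a subspace with projection P to an output state ρ₀ proportional to a projection Q (ρ₀ = Q / rank(Q)). Then there exist scalars u_{ikl} such that for all i, Vᵢ P = Σ_{k,l} u_{ikl} A_{kl}, where A_{kl} = (1/√rank(Q)) |ψₖ⟩⟨φₗ|, with Q = Σₖ |ψₖ⟩⟨ψₖ| and P = Σₗ |φₗ⟩⟨φₗ|. -/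
/-!
Feeding the pure state `|φₗ⟩⟨φₗ|` to the channel gives `∑ᵢ |Vᵢφₗ⟩⟨Vᵢφₗ| = Q / rank Q`.
A sum of rank-one operators `∑ⱼ |wⱼ⟩⟨wⱼ|` kills exactly the vectors orthogonal to every `wⱼ`,
so each `Vᵢφₗ` is orthogonal to `ker Q` and therefore lies in the range of the projection `Q`:
`Vᵢφₗ = ∑ₖ ⟨ψₖ, Vᵢφₗ⟩ ψₖ`. Hence `Vᵢ P = ∑ₗ |Vᵢφₗ⟩⟨φₗ| = ∑ₖₗ ⟨ψₖ, Vᵢφₗ⟩ |ψₖ⟩⟨φₗ|`.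
-/

open Matrix ComplexOrder

namespace Matrix

variable {m n ι R : Type*} [Fintype ι]

section CommRing

variable [CommRing R]

lemma sum_smul_vecMulVec (c : ι → R) (a : ι → m → R) (b : n → R) :
    vecMulVec (∑ k, c k • a k) b = ∑ k, c k • vecMulVec (a k) b := by
  ext i j
  simp only [vecMulVec_apply, Finset.sum_apply, Pi.smul_apply, Matrix.sum_apply,
    Matrix.smul_apply, smul_eq_mul, Finset.sum_mul, mul_assoc]

variable [StarRing R] [Fintype m]

lemma sum_vecMulVec_mulVec (ψ : ι → m → R) (x : m → R) :
    (∑ k, vecMulVec (ψ k) (star (ψ k))) *ᵥ x = ∑ k, (star (ψ k) ⬝ᵥ x) • ψ k := by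
  simp only [sum_mulVec, vecMulVec_mulVec, op_smul_eq_smul]

lemma mul_vecMulVec_mul_conjTranspose (M : Matrix n m R) (x : m → R) :
    M * vecMulVec x (star x) * Mᴴ = vecMulVec (M *ᵥ x) (star (M *ᵥ x)) := by
  rw [mul_vecMulVec, vecMulVec_mul, star_mulVec]

lemma mul_vecMulVec_mul_of_mulVec_eq_self {P : Matrix m m R} (hP : IsSelfAdjoint P)
    {x : m → R} (hx : P *ᵥ x = x) : P * vecMulVec x (star x) * P = vecMulVec x (star x) := by
  have hPH : Pᴴ = P := hP
  nth_rw 2 [← hPH]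
  rw [mul_vecMulVec_mul_conjTranspose, hx]

variable [DecidableEq ι] {ψ : ι → m → R}
  (hψ : ∀ k k', star (ψ k) ⬝ᵥ ψ k' = if k = k' then 1 else 0)
include hψ

lemma sum_vecMulVec_mulVec_of_orthonormal (l : ι) :
    (∑ k, vecMulVec (ψ k) (star (ψ k))) *ᵥ ψ l = ψ l := by
  simp [sum_vecMulVec_mulVec, hψ]

lemma isStarProjection_sum_vecMulVec_of_orthonormal :
    IsStarProjection (∑ k, vecMulVec (ψ k) (star (ψ k))) where
  isIdempotentElem := by
    rw [IsIdempotentElem, Finset.mul_sum]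
    simp only [mul_vecMulVec, sum_vecMulVec_mulVec_of_orthonormal hψ]
  isSelfAdjoint := by
    simp only [IsSelfAdjoint, star_eq_conjTranspose, conjTranspose_sum, conjTranspose_vecMulVec,
      star_star]

end CommRing

section StarOrderedRing

variable [CommRing R] [StarRing R] [PartialOrder R] [StarOrderedRing R] [NoZeroDivisors R]
  [Fintype m]

lemma star_dotProduct_eq_zero_of_sum_vecMulVec_mulVec_eq_zero (w : ι → m → R) {z : m → R}
    (hz : (∑ j, vecMulVec (w j) (star (w j))) *ᵥ z = 0) (i : ι) : star (w i) ⬝ᵥ z = 0 := by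
  set W : Matrix m ι R := of fun a j => w j a
  have hW : W * Wᴴ = ∑ j, vecMulVec (w j) (star (w j)) := by
    ext a b
    simp [W, mul_apply, vecMulVec_apply, Matrix.sum_apply]
  rw [← hW, self_mul_conjTranspose_mulVec_eq_zero] at hz
  simpa [W, mulVec, dotProduct] using congrFun hz i

lemma mulVec_eq_self_of_sum_vecMulVec_eq_smul {Q : Matrix m m R} (hQ : IsStarProjection Q)
    (w : ι → m → R) (c : R) (hw : ∑ j, vecMulVec (w j) (star (w j)) = c • Q) (i : ι) :
    Q *ᵥ w i = w i := by
  set z := w i - Q *ᵥ w i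
  have hQz : Q *ᵥ z = 0 := by
    rw [mulVec_sub, mulVec_mulVec, hQ.isIdempotentElem.eq, sub_self]
  have hwz : star (w i) ⬝ᵥ z = 0 :=
    star_dotProduct_eq_zero_of_sum_vecMulVec_mulVec_eq_zero w
      (by rw [hw, smul_mulVec, hQz, smul_zero]) i
  have hQwz : star (Q *ᵥ w i) ⬝ᵥ z = 0 := by
    have hQH : Qᴴ = Q := hQ.isSelfAdjoint
    rw [star_mulVec, ← dotProduct_mulVec, hQH, hQz, dotProduct_zero]
  have : star z ⬝ᵥ z = 0 := by
    rw [star_sub, sub_dotProduct, hwz, hQwz, sub_zero]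
  exact (sub_eq_zero.mp (dotProduct_star_self_eq_zero.mp this)).symm

end StarOrderedRing

end Matrix

theorem private_to_projection_kraus_span_general
    {s r rQ rP : ℕ}
    (V : Fin r → Matrix (Fin s) (Fin s) ℂ)
    (ψ : Fin rQ → (Fin s → ℂ))
    (hψ : ∀ k k', star (ψ k) ⬝ᵥ ψ k' = if k = k' then 1 else 0)
    (φ : Fin rP → (Fin s → ℂ))
    (hφ : ∀ l l', star (φ l) ⬝ᵥ φ l' = if l = l' then 1 else 0)
    (Q P : Matrix (Fin s) (Fin s) ℂ)
    (hQ : Q = ∑ k, vecMulVec (ψ k) (star (ψ k)))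
    (hPdef : P = ∑ l, vecMulVec (φ l) (star (φ l)))
    (ρ₀ : Matrix (Fin s) (Fin s) ℂ) (hρ₀ : ρ₀ = ((rQ : ℂ))⁻¹ • Q)
    (hpriv : ∀ σ : Matrix (Fin s) (Fin s) ℂ,
      σ.PosSemidef → σ.trace = 1 → P * σ * P = σ →
      ∑ i, V i * σ * (V i)ᴴ = ρ₀) :
    ∃ u : Fin r → Fin rQ → Fin rP → ℂ,
      ∀ i, V i * P = ∑ k, ∑ l, u i k l •
        (((Real.sqrt rQ : ℂ))⁻¹ • vecMulVec (ψ k) (star (φ l))) := by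
  have hPφ : ∀ l, P *ᵥ φ l = φ l := hPdef ▸ sum_vecMulVec_mulVec_of_orthonormal hφ
  have hout : ∀ l, ∑ i, vecMulVec (V i *ᵥ φ l) (star (V i *ᵥ φ l)) = ((rQ : ℂ))⁻¹ • Q := by
    intro l
    simp only [← mul_vecMulVec_mul_conjTranspose, ← hρ₀]
    refine hpriv _ (posSemidef_vecMulVec_self_star _)
      (by rw [trace_vecMulVec, dotProduct_comm, hφ, if_pos rfl]) ?_
    exact mul_vecMulVec_mul_of_mulVec_eq_self
      (hPdef ▸ (isStarProjection_sum_vecMulVec_of_orthonormal hφ).isSelfAdjoint) (hPφ l)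
  have hrange : ∀ i l, V i *ᵥ φ l = ∑ k, (star (ψ k) ⬝ᵥ (V i *ᵥ φ l)) • ψ k := fun i l => by
    rw [← sum_vecMulVec_mulVec, ← hQ, mulVec_eq_self_of_sum_vecMulVec_eq_smul
      (hQ ▸ isStarProjection_sum_vecMulVec_of_orthonormal hψ) _ _ (hout l)]
  refine ⟨fun i k l => Real.sqrt rQ * (star (ψ k) ⬝ᵥ (V i *ᵥ φ l)), fun i => ?_⟩
  calc V i * P = ∑ l, vecMulVec (V i *ᵥ φ l) (star (φ l)) := by
        simp only [hPdef, Finset.mul_sum, mul_vecMulVec]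
    _ = ∑ l, ∑ k, (star (ψ k) ⬝ᵥ (V i *ᵥ φ l)) • vecMulVec (ψ k) (star (φ l)) := by
        simp only [← sum_smul_vecMulVec, ← hrange]
    _ = _ := by
        rw [Finset.sum_comm]
        refine Finset.sum_congr rfl fun k _ => Finset.sum_congr rfl fun l _ => ?_
        have hk : (Real.sqrt rQ : ℂ) ≠ 0 :=
          Complex.ofReal_ne_zero.mpr (Real.sqrt_pos.mpr (Nat.cast_pos.mpr k.pos)).ne'
        rw [smul_smul, mul_right_comm, mul_inv_cancel₀ hk, one_mul]

/-- If a channel with Kraus operators {Vᵢ} privatizes the subspace with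
projector P = Σₗ|φₗ⟩⟨φₗ| to an output ρ₀ = Q/rank(Q) proportional to the
projection Q = Σₖ|ψₖ⟩⟨ψₖ|, then every compressed Kraus operator Vᵢ P is a
linear combination of the operators A_{kl} = (1/√rank Q)|ψₖ⟩⟨φₗ|. -/
theorem private_to_projection_kraus_span
    {s r rQ rP : ℕ} (hrQ : 0 < rQ)
    (V : Fin r → Matrix (Fin s) (Fin s) ℂ)
    (hV : ∑ i, (V i)ᴴ * V i = 1)
    (ψ : Fin rQ → (Fin s → ℂ))
    (hψ : ∀ k k', star (ψ k) ⬝ᵥ ψ k' = if k = k' then 1 else 0)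
    (φ : Fin rP → (Fin s → ℂ))
    (hφ : ∀ l l', star (φ l) ⬝ᵥ φ l' = if l = l' then 1 else 0)
    (Q P : Matrix (Fin s) (Fin s) ℂ)
    (hQ : Q = ∑ k, vecMulVec (ψ k) (star (ψ k)))
    (hPdef : P = ∑ l, vecMulVec (φ l) (star (φ l)))
    (ρ₀ : Matrix (Fin s) (Fin s) ℂ) (hρ₀ : ρ₀ = ((rQ : ℂ))⁻¹ • Q)
    (hpriv : ∀ σ : Matrix (Fin s) (Fin s) ℂ,
      σ.PosSemidef → σ.trace = 1 → P * σ * P = σ →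
      ∑ i, V i * σ * (V i)ᴴ = ρ₀) :
    ∃ u : Fin r → Fin rQ → Fin rP → ℂ,
      ∀ i, V i * P = ∑ k, ∑ l, u i k l •
        (((Real.sqrt rQ : ℂ))⁻¹ • vecMulVec (ψ k) (star (φ l))) :=
  private_to_projection_kraus_span_general V ψ hψ φ hφ Q P hQ hPdef ρ₀ hρ₀ hpriv
end

section
/- For the two-qubit dephasing channel with Kraus operators Aₖ obtained as the complementary channel of Λ (where A₁,…,A₄ are the four 4×4 matrices with k-th column pattern (1/2)(±1,±1,±1,±1)ᵀ given by the Hadamard sign pattern, placed in column k), the conjugated complementary channel (Λ^♯)'(ρ) = Σᵢ Bᵢ ρ Bᵢ† with Bᵢ = U Aᵢ U† and U = CNOT₁₂·CNOT₂₁·(K†⊗I₂) satisfies (Λ^♯)'((1/2)I₂ ⊗ σ_B) = (1/4)I₄ for every density matrix σ_B; i.e., the complementary channel is also private on the same subsystem. -/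
/-!
Writing `h k` for the columns of `H ⊗ H`, each Kraus operator of `Λ^♯` is `Aₖ = ½ (h k) eₖᵀ`, so
`Λ^♯ Y = ¼ (H ⊗ H) diag(Y) (H ⊗ H)ᴴ`; since `(H ⊗ H)(H ⊗ H)ᴴ = 4`, `Λ^♯` sends every matrix with
constant diagonal `d` to `d • 1`. The conjugated channel is `Y ↦ U Λ^♯(Uᴴ Y U) Uᴴ`, and the diagonal of
`Uᴴ (½ 1 ⊗ σ) U` is constant: at `(c, d)` it is `½ ∑_b |K c b|² σ b b = ¼ tr σ`, because every entry of
`K` has modulus `1/√2`. Unitarity of `U` finishes the argument.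
-/

open Matrix Kronecker ComplexOrder

noncomputable section

/-- Hadamard sign matrix. -/
def Had : Matrix (Fin 2) (Fin 2) ℂ := !![1, 1; 1, -1]

/-- Kraus operators of the complementary channel Λ^♯: the k-th operator has
nonzero entries only in column k, equal to (1/2)·(k-th Hadamard sign column). -/
def Acomp (k : Fin 2 × Fin 2) : Matrix (Fin 2 × Fin 2) (Fin 2 × Fin 2) ℂ :=
  (1/2 : ℂ) • vecMulVec (fun p => (Had ⊗ₖ Had) p k) (fun q => if q = k then 1 else 0)

def Bcomp (k : Fin 2 × Fin 2) : Matrix (Fin 2 × Fin 2) (Fin 2 × Fin 2) ℂ :=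
  Urot * Acomp k * Urotᴴ

open ComplexConjugate

section
variable {R n ι : Type*} [CommSemiring R] [StarRing R] [Fintype n] [Fintype ι]

theorem sum_conj_mul_conjTranspose (A : ι → Matrix n n R) (U X : Matrix n n R) :
    ∑ k, U * A k * Uᴴ * X * (U * A k * Uᴴ)ᴴ = U * (∑ k, A k * (Uᴴ * X * U) * (A k)ᴴ) * Uᴴ := by
  simp only [conjTranspose_mul, conjTranspose_conjTranspose, Finset.mul_sum, Finset.sum_mul,
    Matrix.mul_assoc]

theorem sum_vecMulVec_single_mul_mul_conjTranspose [DecidableEq n] (W Y : Matrix n n R) :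
    ∑ k, vecMulVec (fun p => W p k) (Pi.single k 1) * Y *
      (vecMulVec (fun p => W p k) (Pi.single k 1))ᴴ = W * diagonal Y.diag * Wᴴ := by
  ext i j
  simp [vecMulVec_apply, mul_apply, Matrix.sum_apply, Pi.single_apply, diagonal_apply,
    conjTranspose_apply]

end

theorem Acomp_eq_smul_vecMulVec (k : Fin 2 × Fin 2) :
    Acomp k = (1/2 : ℂ) • vecMulVec (fun p => (Had ⊗ₖ Had) p k) (Pi.single k 1) := by
  unfold Acomp
  congr 2
  funext q
  exact (Pi.single_apply k 1 q).symm

theorem Had_mul_conjTranspose : Had * Hadᴴ = (2 : ℂ) • 1 := by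
  ext i j
  fin_cases i <;> fin_cases j <;> norm_num [Had, mul_apply, Fin.sum_univ_two]

theorem kronecker_Had_mul_conjTranspose : (Had ⊗ₖ Had) * (Had ⊗ₖ Had)ᴴ = (4 : ℂ) • 1 := by
  rw [conjTranspose_kronecker, ← mul_kronecker_mul, Had_mul_conjTranspose, smul_kronecker,
    kronecker_smul, one_kronecker_one, smul_smul]
  norm_num

theorem sum_Acomp_mul_mul_conjTranspose_of_diag_eq (Y : Matrix (Fin 2 × Fin 2) (Fin 2 × Fin 2) ℂ)
    (d : ℂ) (hY : ∀ k, Y k k = d) : ∑ k, Acomp k * Y * (Acomp k)ᴴ = d • 1 := by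
  have hdiag : diagonal Y.diag = d • 1 := by
    ext i j
    simp [diagonal_apply, one_apply, hY]
  calc ∑ k, Acomp k * Y * (Acomp k)ᴴ
      = (1/4 : ℂ) • ∑ k, vecMulVec (fun p => (Had ⊗ₖ Had) p k) (Pi.single k 1) * Y *
          (vecMulVec (fun p => (Had ⊗ₖ Had) p k) (Pi.single k 1))ᴴ := by
        rw [Finset.smul_sum]
        refine Finset.sum_congr rfl fun k _ => ?_
        rw [Acomp_eq_smul_vecMulVec, conjTranspose_smul, Matrix.smul_mul, Matrix.smul_mul,
          Matrix.mul_smul, smul_smul]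
        norm_num
    _ = (1/4 : ℂ) • ((Had ⊗ₖ Had) * diagonal Y.diag * (Had ⊗ₖ Had)ᴴ) := by
        rw [sum_vecMulVec_single_mul_mul_conjTranspose]
    _ = d • 1 := by
        rw [hdiag, Matrix.mul_smul, Matrix.mul_one, Matrix.smul_mul, kronecker_Had_mul_conjTranspose,
          smul_smul, smul_smul]
        congr 1
        ring

theorem Kgate_mem_unitaryGroup : Kgate ∈ unitaryGroup (Fin 2) ℂ := by
  rw [mem_unitaryGroup_iff]
  ext i j
  fin_cases i <;> fin_cases j <;> simp [Kgate, mul_apply, Fin.sum_univ_two, Complex.ext_iff] <;>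
    ring_nf <;> norm_num

theorem Kgate_apply_mul_conj (i j : Fin 2) : Kgate i j * conj (Kgate i j) = 1 / 2 := by
  fin_cases i <;> fin_cases j <;> simp [Kgate, Complex.ext_iff] <;> ring_nf <;> norm_num

theorem CNOT12_mem_unitaryGroup : CNOT12 ∈ unitaryGroup (Fin 2 × Fin 2) ℂ := by
  rw [mem_unitaryGroup_iff']
  ext ⟨a, b⟩ ⟨c, d⟩
  fin_cases a <;> fin_cases b <;> fin_cases c <;> fin_cases d <;>
    simp [CNOT12, mul_apply, Fintype.sum_prod_type, Fin.sum_univ_two]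

theorem CNOT21_mem_unitaryGroup : CNOT21 ∈ unitaryGroup (Fin 2 × Fin 2) ℂ := by
  rw [mem_unitaryGroup_iff']
  ext ⟨a, b⟩ ⟨c, d⟩
  fin_cases a <;> fin_cases b <;> fin_cases c <;> fin_cases d <;>
    simp [CNOT21, mul_apply, Fintype.sum_prod_type, Fin.sum_univ_two]

theorem Urot_mem_unitaryGroup : Urot ∈ unitaryGroup (Fin 2 × Fin 2) ℂ :=
  mul_mem (mul_mem CNOT12_mem_unitaryGroup CNOT21_mem_unitaryGroup)
    (kronecker_mem_unitary (Unitary.star_mem Kgate_mem_unitaryGroup) (one_mem _))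

-- `CNOT12 * CNOT21` is the permutation `|a, b⟩ ↦ |a + b, a⟩`.
theorem Urot_apply (p q : Fin 2 × Fin 2) :
    Urot p q = star (Kgate q.1 p.2) * if q.2 = p.1 + p.2 then 1 else 0 := by
  rcases p with ⟨a, b⟩
  rcases q with ⟨c, d⟩
  fin_cases a <;> fin_cases b <;> fin_cases c <;> fin_cases d <;>
    simp [Urot, CNOT12, CNOT21, mul_apply, Fintype.sum_prod_type, Fin.sum_univ_two, one_apply]

theorem conjTranspose_Urot_mul_kronecker_mul_Urot_apply_self (σ : Matrix (Fin 2) (Fin 2) ℂ)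
    (hσ : σ.trace = 1) (j : Fin 2 × Fin 2) :
    (Urotᴴ * (((1/2 : ℂ) • (1 : Matrix (Fin 2) (Fin 2) ℂ)) ⊗ₖ σ) * Urot) j j = 1 / 4 := by
  rcases j with ⟨c, d⟩
  have hσ' : σ 0 0 + σ 1 1 = 1 := by simpa [trace, Fin.sum_univ_two] using hσ
  have h0 := Kgate_apply_mul_conj c 0
  have h1 := Kgate_apply_mul_conj c 1
  fin_cases d <;> simp [mul_apply, Urot_apply, Fintype.sum_prod_type, Fin.sum_univ_two, one_apply] <;>
    linear_combination (σ 0 0 / 2) * h0 + (σ 1 1 / 2) * h1 + (1 / 4) * hσ'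

theorem complementary_channel_also_private_general
    (σB : Matrix (Fin 2) (Fin 2) ℂ) (htr : σB.trace = 1) :
    ∑ k : Fin 2 × Fin 2,
      Bcomp k * (((1/2 : ℂ) • (1 : Matrix (Fin 2) (Fin 2) ℂ)) ⊗ₖ σB) * (Bcomp k)ᴴ
    = (1/4 : ℂ) • (1 : Matrix (Fin 2 × Fin 2) (Fin 2 × Fin 2) ℂ) := by
  have hU : Urot * Urotᴴ = 1 := mem_unitaryGroup_iff.mp Urot_mem_unitaryGroup
  unfold Bcomp
  rw [sum_conj_mul_conjTranspose, sum_Acomp_mul_mul_conjTranspose_of_diag_eq _ _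
    (conjTranspose_Urot_mul_kronecker_mul_Urot_apply_self σB htr),
    Matrix.mul_smul, Matrix.mul_one, Matrix.smul_mul, hU]

/-- The conjugated complementary channel (Λ^♯)' of the two-qubit dephasing
channel is also private on the same subsystem:
(Λ^♯)'((1/2)I ⊗ σ_B) = (1/4)I for every density matrix σ_B. -/
theorem complementary_channel_also_private
    (σB : Matrix (Fin 2) (Fin 2) ℂ) (hσB : σB.PosSemidef) (htr : σB.trace = 1) :
    ∑ k : Fin 2 × Fin 2,
      Bcomp k * (((1/2 : ℂ) • (1 : Matrix (Fin 2) (Fin 2) ℂ)) ⊗ₖ σB) * (Bcomp k)ᴴ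
    = (1/4 : ℂ) • (1 : Matrix (Fin 2 × Fin 2) (Fin 2 × Fin 2) ℂ) :=
  complementary_channel_also_private_general σB htr
end
end

section
/- Let Ψ be a channel with 0 ≤ Ψ(ρ) in Löwner order for all positive ρ, and suppose Ψ(σ_A ⊗ P) = σ_A ⊗ P where P = |ψ⟩⟨ψ| is a rank-one projection on B and σ_A = Σₖ pₖ|αₖ⟩⟨αₖ| with pₖ > 0. Then for each k there exists a positive operator σ_{ψ,k} on A with tr σ_{ψ,k} = 1 (after normalization) such that Ψ(|αₖ⟩⟨αₖ| ⊗ P) = σ_{ψ,k} ⊗ P. -/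
open Matrix Kronecker ComplexOrder

/-! A PSD operator dominated by one supported on the range of an isometry `V` is itself
supported there. Writing `|αₖ⟩⟨αₖ| ⊗ P = V |αₖ⟩⟨αₖ| Vᴴ` for the isometry `V = W (1 ⊗ |ψ⟩)`,
the fixed-point equation gives `pₖ Ψ(V |αₖ⟩⟨αₖ| Vᴴ) ≤ Ψ(V σ_A Vᴴ) = V σ_A Vᴴ`, so
`Ψ(V |αₖ⟩⟨αₖ| Vᴴ) = V σ' Vᴴ` with `σ' = Vᴴ Ψ(V |αₖ⟩⟨αₖ| Vᴴ) V`, whose trace is that of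
`|αₖ⟩⟨αₖ|` because `Ψ` is trace-preserving. -/

open scoped MatrixOrder

namespace Matrix

variable {𝕜 : Type*} [RCLike 𝕜] {m n : Type*} [Fintype n]

lemma mul_mul_conjTranspose_mono [Fintype m] (V : Matrix m n 𝕜) {A B : Matrix n n 𝕜}
    (h : A ≤ B) :
    V * A * Vᴴ ≤ V * B * Vᴴ := by
  rw [le_iff, ← Matrix.sub_mul, ← Matrix.mul_sub]
  exact (le_iff.mp h).mul_mul_conjTranspose_same V

lemma trace_mul_mul_conjTranspose_of_isometry [Fintype m] [DecidableEq n] {V : Matrix m n 𝕜}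
    (hV : Vᴴ * V = 1) (A : Matrix n n 𝕜) : (V * A * Vᴴ).trace = A.trace := by
  rw [trace_mul_cycle, hV, Matrix.one_mul]

lemma PosSemidef.mul_conjTranspose_eq_zero {X : Matrix n n 𝕜} (hX : X.PosSemidef)
    {R : Matrix m n 𝕜} (h : R * X * Rᴴ = 0) : X * Rᴴ = 0 := by
  classical
  obtain ⟨B, rfl⟩ := CStarAlgebra.nonneg_iff_eq_star_mul_self.mp hX.nonneg
  have hBR : (B * Rᴴ)ᴴ * (B * Rᴴ) = 0 := by
    simpa only [conjTranspose_mul, conjTranspose_conjTranspose, star_eq_conjTranspose,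
      Matrix.mul_assoc] using h
  rw [star_eq_conjTranspose, Matrix.mul_assoc, conjTranspose_mul_self_eq_zero.mp hBR,
    Matrix.mul_zero]

lemma PosSemidef.mul_conjTranspose_eq_zero_of_le [Fintype m] {X Y : Matrix n n 𝕜}
    (hX : X.PosSemidef) (hXY : X ≤ Y) {R : Matrix m n 𝕜} (hR : R * Y = 0) : X * Rᴴ = 0 := by
  refine hX.mul_conjTranspose_eq_zero (le_antisymm ?_ (hX.mul_mul_conjTranspose_same R).nonneg)
  simpa [hR] using mul_mul_conjTranspose_mono R hXY

lemma PosSemidef.eq_compression_of_le [Fintype m] [DecidableEq m] [DecidableEq n]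
    {V : Matrix m n 𝕜} (hV : Vᴴ * V = 1) {X : Matrix m m 𝕜} (hX : X.PosSemidef)
    {N : Matrix n n 𝕜} (hXN : X ≤ V * N * Vᴴ) :
    X = V * (Vᴴ * X * V) * Vᴴ := by
  have hR : (1 - V * Vᴴ) * (V * N * Vᴴ) = 0 := by
    simp only [Matrix.sub_mul, Matrix.one_mul, Matrix.mul_assoc, ← Matrix.mul_assoc Vᴴ, hV,
      Matrix.one_mul, sub_self]
  have hXQ : X * (V * Vᴴ) = X := by
    have h := hX.mul_conjTranspose_eq_zero_of_le hXN hR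
    rwa [conjTranspose_sub, conjTranspose_one, conjTranspose_mul, conjTranspose_conjTranspose,
      Matrix.mul_sub, Matrix.mul_one, sub_eq_zero, eq_comm] at h
  have hQX : V * Vᴴ * X = X := by
    simpa only [conjTranspose_mul, conjTranspose_conjTranspose, hX.isHermitian.eq]
      using congrArg (·ᴴ) hXQ
  calc X = V * Vᴴ * X * (V * Vᴴ) := by rw [Matrix.mul_assoc (V * Vᴴ), hXQ, hQX]
    _ = V * (Vᴴ * X * V) * Vᴴ := by simp only [Matrix.mul_assoc]

variable {α : Type*} [CommSemiring α] [StarRing α] (ι : Type*) {κ : Type*} [Fintype ι]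
  [DecidableEq ι]

/-- `1 ⊗ |ψ⟩`, the map `|i⟩ ↦ |i⟩ ⊗ |ψ⟩`. -/
def kroneckerCol (ψ : κ → α) : Matrix (ι × κ) ι α :=
  Matrix.of fun q i => if q.1 = i then ψ q.2 else 0

lemma kroneckerCol_mul_mul_conjTranspose (ψ : κ → α) (N : Matrix ι ι α) :
    kroneckerCol ι ψ * N * (kroneckerCol ι ψ)ᴴ = N ⊗ₖ vecMulVec ψ (star ψ) := by
  ext ⟨i, j⟩ ⟨i', j'⟩
  simp [kroneckerCol, Matrix.mul_apply, apply_ite star, vecMulVec_apply]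
  ring

lemma conjTranspose_kroneckerCol_mul_self [Fintype κ] (ψ : κ → α) :
    (kroneckerCol ι ψ)ᴴ * kroneckerCol ι ψ = (star ψ ⬝ᵥ ψ) • (1 : Matrix ι ι α) := by
  ext i i'
  simp [kroneckerCol, Matrix.mul_apply, apply_ite star, Fintype.sum_prod_type, dotProduct,
    one_apply, eq_comm]

end Matrix

lemma LinearMap.monotone_of_posSemidef {𝕜 : Type*} [RCLike 𝕜] {m n : Type*} [Fintype m]
    [Fintype n] {Ψ : Matrix m m 𝕜 →ₗ[𝕜] Matrix n n 𝕜}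
    (hΨ : ∀ ρ, ρ.PosSemidef → (Ψ ρ).PosSemidef) : Monotone Ψ := fun A B h => by
  rw [Matrix.le_iff, ← map_sub]
  exact hΨ _ h

/-- If a positive trace-preserving linear map Ψ fixes σ_A ⊗ P, where
P = |ψ⟩⟨ψ| is a rank-one projection on B and σ_A = Σₖ pₖ|αₖ⟩⟨αₖ| with pₖ > 0,
then for each k there is a density operator σ_{ψ,k} on A with
Ψ(|αₖ⟩⟨αₖ| ⊗ P) = σ_{ψ,k} ⊗ P. -/
theorem fixed_point_compression
    {s a b : ℕ}
    (W : Matrix (Fin s) (Fin a × Fin b) ℂ) (hW : Wᴴ * W = 1)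
    (Ψ : Matrix (Fin s) (Fin s) ℂ →ₗ[ℂ] Matrix (Fin s) (Fin s) ℂ)
    (hpos : ∀ ρ : Matrix (Fin s) (Fin s) ℂ, ρ.PosSemidef → (Ψ ρ).PosSemidef)
    (htr : ∀ ρ : Matrix (Fin s) (Fin s) ℂ, (Ψ ρ).trace = ρ.trace)
    (ψ : Fin b → ℂ) (hψ : star ψ ⬝ᵥ ψ = 1)
    (P : Matrix (Fin b) (Fin b) ℂ) (hP : P = vecMulVec ψ (star ψ))
    (p : Fin a → ℝ) (hp : ∀ k, 0 < p k)
    (α : Fin a → (Fin a → ℂ))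
    (hα : ∀ k k', star (α k) ⬝ᵥ α k' = if k = k' then 1 else 0)
    (σA : Matrix (Fin a) (Fin a) ℂ)
    (hσA : σA = ∑ k, (p k : ℂ) • vecMulVec (α k) (star (α k)))
    (hfix : Ψ (W * (σA ⊗ₖ P) * Wᴴ) = W * (σA ⊗ₖ P) * Wᴴ) :
    ∀ k : Fin a, ∃ σ' : Matrix (Fin a) (Fin a) ℂ,
      σ'.PosSemidef ∧ σ'.trace = 1 ∧
      Ψ (W * (vecMulVec (α k) (star (α k)) ⊗ₖ P) * Wᴴ)
        = W * (σ' ⊗ₖ P) * Wᴴ := by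
  intro k
  set V := W * kroneckerCol (Fin a) ψ
  have hV : Vᴴ * V = 1 := by
    rw [conjTranspose_mul, Matrix.mul_assoc, ← Matrix.mul_assoc Wᴴ, hW, Matrix.one_mul,
      conjTranspose_kroneckerCol_mul_self, hψ, one_smul]
  have hconj (N : Matrix (Fin a) (Fin a) ℂ) : W * (N ⊗ₖ P) * Wᴴ = V * N * Vᴴ := by
    rw [hP, ← kroneckerCol_mul_mul_conjTranspose]
    simp only [V, conjTranspose_mul, Matrix.mul_assoc]
  simp only [hconj] at hfix ⊢
  set ρ := vecMulVec (α k) (star (α k))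
  set X := Ψ (V * ρ * Vᴴ)
  have hX : X.PosSemidef :=
    hpos _ ((posSemidef_vecMulVec_self_star _).mul_mul_conjTranspose_same V)
  have hp' (k : Fin a) : (0 : ℂ) ≤ p k := Complex.zero_le_real.mpr (hp k).le
  have hρ : (p k : ℂ) • ρ ≤ σA := by
    rw [hσA]
    exact Finset.single_le_sum (f := fun k' => (p k' : ℂ) • vecMulVec (α k') (star (α k')))
      (fun k' _ => ((posSemidef_vecMulVec_self_star _).smul (hp' k')).nonneg) (Finset.mem_univ k)
  have hle : (p k : ℂ) • X ≤ V * σA * Vᴴ := calc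
    (p k : ℂ) • X = Ψ (V * ((p k : ℂ) • ρ) * Vᴴ) := by
      rw [Matrix.mul_smul, Matrix.smul_mul, map_smul]
    _ ≤ Ψ (V * σA * Vᴴ) :=
      LinearMap.monotone_of_posSemidef hpos (mul_mul_conjTranspose_mono V hρ)
    _ = V * σA * Vᴴ := hfix
  have hXeq : X = V * (Vᴴ * X * V) * Vᴴ := by
    refine smul_right_injective _ (Complex.ofReal_ne_zero.mpr (hp k).ne') ?_
    simpa only [Matrix.mul_smul, Matrix.smul_mul] using
      (hX.smul (hp' k)).eq_compression_of_le hV hle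
  refine ⟨Vᴴ * X * V, hX.conjTranspose_mul_mul_same V, ?_, hXeq⟩
  rw [← trace_mul_mul_conjTranspose_of_isometry hV, ← hXeq, htr,
    trace_mul_mul_conjTranspose_of_isometry hV, trace_vecMulVec, dotProduct_comm, hα, if_pos rfl]
end

section
/- In the setting where a positive trace-preserving map Ψ satisfies Ψ(|α⟩⟨α| ⊗ |ψ⟩⟨ψ|) = σ_{ψ,α} ⊗ |ψ⟩⟨ψ| for every unit vector |ψ⟩ in a 2-dimensional space B, the A-part σ_{ψ,α} is independent of |ψ⟩: with orthonormal basis |ψ₁⟩, |ψ₂⟩ of B and |±⟩ = (|ψ₁⟩ ± |ψ₂⟩)/√2, one has σ_{1,α} = (1/2)(σ_{+,α} + σ_{−,α}) = σ_{2,α}, hence σ_{1,α} = σ_{2,α}. -/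
open Matrix Kronecker ComplexOrder

set_option maxHeartbeats 1000000 in
/-- If a positive trace-preserving linear map Ψ satisfies
Ψ(|α⟩⟨α| ⊗ |ψ⟩⟨ψ|) = σ_{ψ,α} ⊗ |ψ⟩⟨ψ| for every unit vector |ψ⟩ in the
2-dimensional space B, then the A-part σ_{ψ,α} is independent of |ψ⟩:
σ_{1,α} = (1/2)(σ_{+,α} + σ_{−,α}) = σ_{2,α}. -/
theorem A_part_independent_of_B_state
    {a : ℕ}
    (Ψ : Matrix (Fin a × Fin 2) (Fin a × Fin 2) ℂ →ₗ[ℂ]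
         Matrix (Fin a × Fin 2) (Fin a × Fin 2) ℂ)
    (hpos : ∀ ρ, ρ.PosSemidef → (Ψ ρ).PosSemidef)
    (htr : ∀ ρ, (Ψ ρ).trace = ρ.trace)
    (α : Fin a → ℂ) (hα : star α ⬝ᵥ α = 1)
    (σ : (Fin 2 → ℂ) → Matrix (Fin a) (Fin a) ℂ)
    (hσ : ∀ ψ : Fin 2 → ℂ, star ψ ⬝ᵥ ψ = 1 →
      Ψ (vecMulVec α (star α) ⊗ₖ vecMulVec ψ (star ψ))
        = σ ψ ⊗ₖ vecMulVec ψ (star ψ))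
    (ψ₁ ψ₂ : Fin 2 → ℂ)
    (h11 : star ψ₁ ⬝ᵥ ψ₁ = 1) (h22 : star ψ₂ ⬝ᵥ ψ₂ = 1)
    (h12 : star ψ₁ ⬝ᵥ ψ₂ = 0) :
    σ ψ₁ = (1/2 : ℂ) •
        (σ (fun j => (ψ₁ j + ψ₂ j) / (Real.sqrt 2 : ℂ))
          + σ (fun j => (ψ₁ j - ψ₂ j) / (Real.sqrt 2 : ℂ)))
      ∧ σ ψ₁ = σ ψ₂ := by
  set s : ℂ := ((Real.sqrt 2 : ℝ) : ℂ) with hs_def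
  have hs : s * s = 2 := by
    rw [hs_def]; norm_cast; rw [Real.mul_self_sqrt]; norm_num
  have hs0 : s ≠ 0 := by
    intro h; rw [h, mul_zero] at hs; exact two_ne_zero hs.symm
  have hcs : (starRingEnd ℂ) s = s := by rw [hs_def]; exact Complex.conj_ofReal _
  set ψp : Fin 2 → ℂ := fun j => (ψ₁ j + ψ₂ j) / s with hψp
  set ψm : Fin 2 → ℂ := fun j => (ψ₁ j - ψ₂ j) / s with hψm
  have h21 : star ψ₂ ⬝ᵥ ψ₁ = 0 := by
    have := congrArg (starRingEnd ℂ) h12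
    simpa [dotProduct, Fin.sum_univ_two, mul_comm] using this
  have h11' := h11; have h22' := h22; have h12' := h12; have h21' := h21
  simp only [dotProduct, Fin.sum_univ_two, Pi.star_apply, RCLike.star_def] at h11' h22' h12' h21'
  have hp1 : star ψp ⬝ᵥ ψp = 1 := by
    simp only [dotProduct, Fin.sum_univ_two, Pi.star_apply, RCLike.star_def, hψp,
      map_div₀, map_add, hcs]
    field_simp
    linear_combination h11' + h22' + h12' + h21' - hs
  have hm1 : star ψm ⬝ᵥ ψm = 1 := by
    simp only [dotProduct, Fin.sum_univ_two, Pi.star_apply, RCLike.star_def, hψm,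
      map_div₀, map_sub, hcs]
    field_simp
    linear_combination h11' + h22' - h12' - h21' - hs
  -- resolution of identity in two ways
  have hsum : vecMulVec ψ₁ (star ψ₁) + vecMulVec ψ₂ (star ψ₂)
      = vecMulVec ψp (star ψp) + vecMulVec ψm (star ψm) := by
    ext k l
    simp only [Matrix.add_apply, vecMulVec_apply, Pi.star_apply, RCLike.star_def, hψp, hψm,
      map_div₀, map_add, map_sub, hcs]
    field_simp
    linear_combination (ψ₁ k * (starRingEnd ℂ) (ψ₁ l) + ψ₂ k * (starRingEnd ℂ) (ψ₂ l)) * hs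
  have E : σ ψ₁ ⊗ₖ vecMulVec ψ₁ (star ψ₁) + σ ψ₂ ⊗ₖ vecMulVec ψ₂ (star ψ₂)
      = σ ψp ⊗ₖ vecMulVec ψp (star ψp) + σ ψm ⊗ₖ vecMulVec ψm (star ψm) := by
    rw [← hσ ψ₁ h11, ← hσ ψ₂ h22, ← hσ ψp hp1, ← hσ ψm hm1, ← map_add, ← map_add,
      ← Matrix.kronecker_add, ← Matrix.kronecker_add, hsum]
  -- contraction functional
  have contract : ∀ (τ : Matrix (Fin a) (Fin a) ℂ) (χ φ : Fin 2 → ℂ) (i j : Fin a),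
      (∑ k : Fin 2, ∑ l : Fin 2, (starRingEnd ℂ) (φ k) *
        ((τ ⊗ₖ vecMulVec χ (star χ)) (i,k) (j,l)) * φ l)
        = (star φ ⬝ᵥ χ) * (star χ ⬝ᵥ φ) * τ i j := by
    intro τ χ φ i j
    simp only [Fin.sum_univ_two, kroneckerMap_apply, vecMulVec_apply, dotProduct,
      Pi.star_apply, RCLike.star_def]
    ring
  have contribs : ∀ (φ : Fin 2 → ℂ) (i j : Fin a),
      (star φ ⬝ᵥ ψ₁) * (star ψ₁ ⬝ᵥ φ) * σ ψ₁ i j + (star φ ⬝ᵥ ψ₂) * (star ψ₂ ⬝ᵥ φ) * σ ψ₂ i j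
      = (star φ ⬝ᵥ ψp) * (star ψp ⬝ᵥ φ) * σ ψp i j
        + (star φ ⬝ᵥ ψm) * (star ψm ⬝ᵥ φ) * σ ψm i j := by
    intro φ i j
    have h := congrArg (fun M : Matrix (Fin a × Fin 2) (Fin a × Fin 2) ℂ =>
      ∑ k : Fin 2, ∑ l : Fin 2, (starRingEnd ℂ) (φ k) * M (i,k) (j,l) * φ l) E
    simp only [Matrix.add_apply, mul_add, add_mul, Finset.sum_add_distrib] at h
    rw [contract, contract, contract, contract] at h
    exact h
  -- dot products with ψp, ψm
  have d1p : star ψ₁ ⬝ᵥ ψp = 1 / s := by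
    simp only [dotProduct, Fin.sum_univ_two, Pi.star_apply, RCLike.star_def, hψp]
    field_simp
    linear_combination h11' + h12'
  have dp1 : star ψp ⬝ᵥ ψ₁ = 1 / s := by
    simp only [dotProduct, Fin.sum_univ_two, Pi.star_apply, RCLike.star_def, hψp,
      map_div₀, map_add, hcs]
    field_simp
    linear_combination h11' + h21'
  have d1m : star ψ₁ ⬝ᵥ ψm = 1 / s := by
    simp only [dotProduct, Fin.sum_univ_two, Pi.star_apply, RCLike.star_def, hψm]
    field_simp
    linear_combination h11' - h12'
  have dm1 : star ψm ⬝ᵥ ψ₁ = 1 / s := by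
    simp only [dotProduct, Fin.sum_univ_two, Pi.star_apply, RCLike.star_def, hψm,
      map_div₀, map_sub, hcs]
    field_simp
    linear_combination h11' - h21'
  have d2p : star ψ₂ ⬝ᵥ ψp = 1 / s := by
    simp only [dotProduct, Fin.sum_univ_two, Pi.star_apply, RCLike.star_def, hψp]
    field_simp
    linear_combination h21' + h22'
  have dp2 : star ψp ⬝ᵥ ψ₂ = 1 / s := by
    simp only [dotProduct, Fin.sum_univ_two, Pi.star_apply, RCLike.star_def, hψp,
      map_div₀, map_add, hcs]
    field_simp
    linear_combination h12' + h22'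
  have d2m : star ψ₂ ⬝ᵥ ψm = -(1 / s) := by
    simp only [dotProduct, Fin.sum_univ_two, Pi.star_apply, RCLike.star_def, hψm]
    field_simp
    linear_combination h21' - h22'
  have dm2 : star ψm ⬝ᵥ ψ₂ = -(1 / s) := by
    simp only [dotProduct, Fin.sum_univ_two, Pi.star_apply, RCLike.star_def, hψm,
      map_div₀, map_sub, hcs]
    field_simp
    linear_combination h12' - h22'
  have key1 : σ ψ₁ = (1/2 : ℂ) • (σ ψp + σ ψm) := by
    ext i j
    have h := contribs ψ₁ i j
    rw [h11, h12, h21, d1p, dp1, d1m, dm1] at h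
    simp only [Matrix.smul_apply, Matrix.add_apply, smul_eq_mul]
    have hss : (1/s) * (1/s) = 1/2 := by
      rw [div_mul_div_comm, one_mul, hs]
    rw [hss] at h
    linear_combination h
  have key2 : σ ψ₂ = (1/2 : ℂ) • (σ ψp + σ ψm) := by
    ext i j
    have h := contribs ψ₂ i j
    have h21'' : star ψ₂ ⬝ᵥ ψ₂ = 1 := h22
    have h12c : star ψ₁ ⬝ᵥ ψ₂ = 0 := h12
    rw [h22, h21, h12c, d2p, dp2, d2m, dm2] at h
    simp only [Matrix.smul_apply, Matrix.add_apply, smul_eq_mul]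
    have hss : (1/s) * (1/s) = 1/2 := by
      rw [div_mul_div_comm, one_mul, hs]
    rw [neg_mul_neg, hss] at h
    linear_combination h
  exact ⟨key1, key1.trans key2.symm⟩
end

section
/- In the same 5-qubit setting, if the ancillary state is instead σ_A = |1100⟩⟨1100| (weight 2) and σ_B = |0⟩⟨0|, then whenever ε₃ + ε₄ + ε₅ > 0 the majority-weight recovery fails: R∘E(encoding) = (ε₀+ε₁+ε₂)τ_{A,0} ⊗ |0⟩⟨0| + (ε₃+ε₄+ε₅)τ_{A,1} ⊗ |1⟩⟨1|, which is not of the form τ_A ⊗ |0⟩⟨0|. Hence B is not an operator quantum error correcting code for this error map over the full ancilla algebra L(A). -/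
open Matrix Kronecker ComplexOrder

noncomputable section

abbrev AIdx := Fin 4 → Fin 2

abbrev RIdx := AIdx × Fin 2

def wt (t : RIdx) : ℕ := (∑ i, ((t.1 i : ℕ))) + (t.2 : ℕ)

def cpl (t : RIdx) : RIdx := (fun i => t.1 i + 1, t.2 + 1)

def correct (t : RIdx) : RIdx := if wt t ≤ 2 then t else cpl t

def flipAt (j : Fin 5) (t : RIdx) : RIdx :=
  if h : (j : ℕ) < 4 then (Function.update t.1 ⟨j, h⟩ (t.1 ⟨j, h⟩ + 1), t.2)
  else (t.1, t.2 + 1)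

def errFlip : Option (Fin 5) → RIdx → RIdx
  | none => id
  | some j => flipAt j

def permMat (f : RIdx → RIdx) : Matrix RIdx RIdx ℂ :=
  fun p q => if p = f q then 1 else 0

def Uenc : Matrix RIdx RIdx ℂ := permMat (fun t => (fun i => t.1 i + t.2, t.2))

def decode (w : {t : RIdx // wt t ≤ 2} ≃ AIdx) (t : RIdx) : RIdx :=
  (if h : wt (correct t) ≤ 2 then w ⟨correct t, h⟩ else 0,
   if wt t ≤ 2 then 0 else 1)

/-- The weight-two ancilla basis label 1100. -/
def x0 : AIdx := fun i => if (i : ℕ) < 2 then 1 else 0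

/-- The weight-two ancilla state |1100⟩⟨1100|. -/
def sigA' : Matrix AIdx AIdx ℂ := Matrix.diagonal fun x => if x = x0 then 1 else 0

/-- σ_B = |0⟩⟨0|. -/
def sigB0 : Matrix (Fin 2) (Fin 2) ℂ := !![1, 0; 0, 0]

def bm (t : RIdx) : Matrix RIdx RIdx ℂ := fun p q => if p = t ∧ q = t then 1 else 0

lemma permMat_conj (f : RIdx → RIdx) (t : RIdx) :
    permMat f * bm t * (permMat f)ᴴ = bm (f t) := by
  ext p q
  simp only [Matrix.mul_apply, bm, permMat, Matrix.conjTranspose_apply, ite_and,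
    apply_ite, mul_ite, ite_mul, one_mul, mul_one, zero_mul, mul_zero,
    _root_.map_one, _root_.map_zero]
  rw [Finset.sum_eq_single t (by intro b _ hb; simp [hb]) (by simp)]
  split_ifs <;> simp_all

lemma kron_eq : sigA' ⊗ₖ sigB0 = bm (x0, 0) := by
  ext p q
  obtain ⟨a, b⟩ := p
  obtain ⟨c, d⟩ := q
  fin_cases b <;> fin_cases d <;>
    simp [sigA', sigB0, bm, Matrix.kroneckerMap_apply, Matrix.diagonal, Prod.ext_iff] <;>
    aesop

lemma conj_sum (f : RIdx → RIdx) (c : Option (Fin 5) → ℂ) (g : Option (Fin 5) → RIdx) :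
    permMat f * (∑ o, c o • bm (g o)) * (permMat f)ᴴ = ∑ o, c o • bm (f (g o)) := by
  rw [Matrix.mul_sum, Matrix.sum_mul]
  refine Finset.sum_congr rfl fun o _ => ?_
  rw [Matrix.mul_smul, Matrix.smul_mul, permMat_conj]

/-- With the weight-two ancilla |1100⟩⟨1100| and σ_B = |0⟩⟨0|, majority-weight
recovery fails whenever ε₃ + ε₄ + ε₅ > 0: the output is not of the form
τ_A ⊗ |0⟩⟨0|, so B is not an operator QEC code over the full ancilla algebra. -/
theorem five_qubit_not_OQECC
    (ε : Option (Fin 5) → ℝ) (hε : ∀ o, 0 ≤ ε o) (hε1 : ∑ o, ε o = 1)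
    (hbad : 0 < ε (some 2) + ε (some 3) + ε (some 4))
    (w : {t : RIdx // wt t ≤ 2} ≃ AIdx) :
    ¬ ∃ τA : Matrix AIdx AIdx ℂ, τA.PosSemidef ∧ τA.trace = 1 ∧
      permMat (decode w) *
        (∑ o : Option (Fin 5), (ε o : ℂ) •
          (permMat (errFlip o) * (Uenc * (sigA' ⊗ₖ sigB0) * Uencᴴ) *
            (permMat (errFlip o))ᴴ)) *
        (permMat (decode w))ᴴ
      = τA ⊗ₖ sigB0 := by
  rintro ⟨τA, -, -, h⟩
  have h1 : Uenc * bm (x0, 0) * Uencᴴ = bm (x0, 0) := by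
    rw [show Uenc = permMat (fun t => (fun i => t.1 i + t.2, t.2)) from rfl, permMat_conj]
    exact congrArg bm (by decide)
  simp only [kron_eq, h1, permMat_conj] at h
  rw [conj_sum] at h
  have key : ∑ o : Option (Fin 5),
      (∑ a : AIdx, (ε o : ℂ) • bm (decode w (errFlip o (x0, 0))) (a, 1) (a, 1)) = 0 := by
    rw [Finset.sum_comm]
    calc ∑ a : AIdx, ∑ o : Option (Fin 5),
            (ε o : ℂ) • bm (decode w (errFlip o (x0, 0))) (a, 1) (a, 1)
        = ∑ a : AIdx, (τA ⊗ₖ sigB0) (a, 1) (a, 1) := by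
          rw [← h]; simp [Matrix.sum_apply]
      _ = 0 := by
          simp [Matrix.kroneckerMap_apply, sigB0]
  have inner : ∀ (v : RIdx) (c : ℂ),
      (∑ a : AIdx, c • bm v (a, 1) (a, 1)) = if v.2 = 1 then c else 0 := by
    rintro ⟨u, b⟩ c
    rw [Finset.sum_eq_single u (by intro a _ ha; simp [bm, Prod.ext_iff, ha]) (by simp)]
    simp [bm, Prod.ext_iff, eq_comm]
  simp only [inner] at key
  have e2 : ∀ (t : RIdx), (decode w t).2 = if wt t ≤ 2 then 0 else 1 := fun _ => rfl
  simp only [e2] at key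
  rw [Fintype.sum_option, Fin.sum_univ_five] at key
  have c0 : wt (errFlip none (x0, 0)) ≤ 2 := by decide
  have c1 : wt (errFlip (some 0) (x0, 0)) ≤ 2 := by decide
  have c2 : wt (errFlip (some 1) (x0, 0)) ≤ 2 := by decide
  have c3 : ¬ wt (errFlip (some 2) (x0, 0)) ≤ 2 := by decide
  have c4 : ¬ wt (errFlip (some 3) (x0, 0)) ≤ 2 := by decide
  have c5 : ¬ wt (errFlip (some 4) (x0, 0)) ≤ 2 := by decide
  rw [if_pos c0, if_pos c1, if_pos c2, if_neg c3, if_neg c4, if_neg c5] at key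
  norm_num at key
  have hc : ((ε (some 2) + ε (some 3) + ε (some 4) : ℝ) : ℂ) = 0 := by
    push_cast
    linear_combination key
  have := Complex.ofReal_eq_zero.mp hc
  linarith
end
end
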